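/- arXiv:2002.09598 — 5 statements merged into one kernel-verified Lean document; each statement's English description precedes it below -/
import Mathlib

section
/- The Minimal Demand (MD) rule always terminates and outputs a committee W with |W| = k. -/
open Finset

variable {V C : Type*} [Fintype V] [Fintype C] [DecidableEq V] [DecidableEq C] {m : ℕ}

/-- The `j`-prefix of voter `i`: the set of their `j` most preferred candidates
(candidate ranks are given by `rank i`, smaller rank = more preferred). -/
def prefixSet (rank : V → C ≃ Fin m) (i : V) (j : ℕ) : Finset C :=
  Finset.univ.filter fun c => (rank i c : ℕ) < j

/-- The equivalence class of voters whose `j`-prefix equals `C'`. -/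
def eqClass (rank : V → C ≃ Fin m) (j : ℕ) (C' : Finset C) : Finset V :=
  Finset.univ.filter fun i => prefixSet rank i j = C'

/-- `N'` is a solid coalition supporting `C'`: every voter in `N'` prefers every
candidate in `C'` to every candidate outside `C'`. -/
def Solid (rank : V → C ≃ Fin m) (N' : Finset V) (C' : Finset C) : Prop :=
  ∀ i ∈ N', ∀ c' ∈ C', ∀ c ∉ C', (rank i c' : ℕ) < (rank i c : ℕ)

/-- `W` satisfies `q`-PSC. -/
def PSC (rank : V → C ≃ Fin m) (q : ℝ) (W : Finset C) : Prop :=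
  ∀ ℓ : ℕ, 0 < ℓ → ∀ N' : Finset V, ∀ C' : Finset C,
    Solid rank N' C' → (ℓ : ℝ) * q ≤ (N'.card : ℝ) →
    min ℓ C'.card ≤ (W ∩ C').card

/-- One addition step of the Minimal Demand rule at stage `j`: some equivalence
class with `j`-prefix `C'` has an unmet PSC demand, and a candidate of `C' \ W`
is added. -/
def mdStep (rank : V → C ≃ Fin m) (q : ℝ) (j : ℕ) (W W' : Finset C) : Prop :=
  ∃ C' : Finset C,
    ((W ∩ C').card : ℤ) < min ⌊((eqClass rank j C').card : ℝ) / q⌋ (C'.card : ℤ) ∧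
    ∃ c ∈ C', c ∉ W ∧ W' = insert c W

/-- A complete run of stage `j` of the Minimal Demand rule: repeat `mdStep`
until no further step is possible. -/
def mdStage (rank : V → C ≃ Fin m) (q : ℝ) (j : ℕ) (W W' : Finset C) : Prop :=
  Relation.ReflTransGen (mdStep rank q j) W W' ∧ ∀ W'', ¬ mdStep rank q j W' W''

/-- `W` is a possible outcome of the Minimal Demand rule: starting from `∅`,
run stages `j = 1, …, m` to completion (for some choice of added candidates). -/
def MDOutcome (rank : V → C ≃ Fin m) (q : ℝ) (W : Finset C) : Prop :=
  ∃ f : ℕ → Finset C, f 0 = ∅ ∧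
    (∀ j < m, mdStage rank q (j + 1) (f j) (f (j + 1))) ∧ W = f m

/-- Auxiliary invariant: a fractional load witnessing that every committee member
is supported by `q` units of voter mass, each voter having capacity `1`, and mass
placed on a voter only for candidates in that voter's `j`-prefix. -/
def MDInv (rank : V → C ≃ Fin m) (q : ℝ) (j : ℕ) (W : Finset C) : Prop :=
  ∃ x : C → V → ℝ, (∀ c i, 0 ≤ x c i) ∧
    (∀ c i, x c i ≠ 0 → (rank i c : ℕ) < j) ∧
    (∀ i, ∑ c, x c i ≤ 1) ∧
    (∀ c ∈ W, ∑ i, x c i = q) ∧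
    (∀ c, c ∉ W → ∀ i, x c i = 0)

lemma mdInv_mono {rank : V → C ≃ Fin m} {q : ℝ} {j j' : ℕ} {W : Finset C}
    (hjj : j ≤ j') (h : MDInv rank q j W) : MDInv rank q j' W := by
  obtain ⟨x, h1, h2, h3, h4, h5⟩ := h
  exact ⟨x, h1, fun c i hc => lt_of_lt_of_le (h2 c i hc) hjj, h3, h4, h5⟩

lemma mdInv_empty (rank : V → C ≃ Fin m) (q : ℝ) (j : ℕ) :
    MDInv rank q j (∅ : Finset C) := by
  refine ⟨fun _ _ => 0, fun _ _ => le_refl 0, fun c i hc => absurd rfl hc, ?_, ?_, ?_⟩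
  · intro i; simp
  · intro c hc; simp at hc
  · intro c _ i; rfl

lemma mem_eqClass_iff {rank : V → C ≃ Fin m} {j : ℕ} {C' : Finset C} {i : V} :
    i ∈ eqClass rank j C' ↔ prefixSet rank i j = C' := by
  simp [eqClass]

lemma mdInv_step {rank : V → C ≃ Fin m} {q : ℝ} {j : ℕ} {W W' : Finset C}
    (hq : 0 < q) (h : MDInv rank q j W) (hs : mdStep rank q j W W') :
    MDInv rank q j W' := by
  obtain ⟨x, hx0, hxsupp, hxv, hxW, hxnW⟩ := h
  obtain ⟨C', hlt, c₀, hc₀C', hc₀W, rfl⟩ := hs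
  set N' : Finset V := eqClass rank j C' with hN'
  -- key counting fact
  have hfloor : ((W ∩ C').card : ℤ) + 1 ≤ ⌊((N'.card : ℝ)) / q⌋ := by
    have := le_min_iff.mp (Int.add_one_le_iff.mpr hlt)
    exact this.1
  have hcount : q * (((W ∩ C').card : ℝ) + 1) ≤ (N'.card : ℝ) := by
    have h1 : (((W ∩ C').card : ℤ) + 1 : ℝ) ≤ (N'.card : ℝ) / q := by
      have := Int.le_floor.mp hfloor
      exact_mod_cast this
    have h2 : (((W ∩ C').card : ℝ) + 1) ≤ (N'.card : ℝ) / q := by exact_mod_cast h1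
    calc q * (((W ∩ C').card : ℝ) + 1) ≤ q * ((N'.card : ℝ) / q) :=
          mul_le_mul_of_nonneg_left h2 hq.le
      _ = (N'.card : ℝ) := by field_simp
  -- the total load on voters of N' is at most q * |W ∩ C'|
  have hvanish : ∀ c, c ∉ W ∩ C' → ∑ i ∈ N', x c i = 0 := by
    intro c hc
    apply Finset.sum_eq_zero
    intro i hi
    by_contra hne
    have hcW : c ∈ W := by
      by_contra hcW; exact hne (hxnW c hcW i)
    have hrank := hxsupp c i hne
    have hpref : c ∈ prefixSet rank i j := by
      simp [prefixSet, hrank]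
    rw [mem_eqClass_iff.mp hi] at hpref
    exact hc (Finset.mem_inter.mpr ⟨hcW, hpref⟩)
  have hload : ∑ i ∈ N', ∑ c, x c i ≤ q * ((W ∩ C').card : ℝ) := by
    rw [Finset.sum_comm]
    have e1 : ∑ c, ∑ i ∈ N', x c i = ∑ c ∈ W ∩ C', ∑ i ∈ N', x c i := by
      symm
      apply Finset.sum_subset (Finset.subset_univ _)
      intro c _ hc; exact hvanish c hc
    rw [e1]
    have : ∀ c ∈ W ∩ C', ∑ i ∈ N', x c i ≤ q := by
      intro c hc
      calc ∑ i ∈ N', x c i ≤ ∑ i, x c i :=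
            Finset.sum_le_sum_of_subset_of_nonneg (Finset.subset_univ _)
              (fun i _ _ => hx0 c i)
        _ = q := hxW c (Finset.mem_inter.mp hc).1
    calc ∑ c ∈ W ∩ C', ∑ i ∈ N', x c i ≤ ∑ c ∈ W ∩ C', q := Finset.sum_le_sum this
      _ = ((W ∩ C').card : ℝ) * q := by rw [Finset.sum_const, nsmul_eq_mul]
      _ = q * ((W ∩ C').card : ℝ) := mul_comm _ _
  -- free capacity on N'
  set F : ℝ := ∑ i ∈ N', (1 - ∑ c, x c i) with hF
  have hFq : q ≤ F := by
    have : F = (N'.card : ℝ) - ∑ i ∈ N', ∑ c, x c i := by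
      rw [hF, Finset.sum_sub_distrib, Finset.sum_const, nsmul_eq_mul, mul_one]
    rw [this]
    have := hcount
    linarith
  have hFpos : 0 < F := lt_of_lt_of_le hq hFq
  have hfree0 : ∀ i, 0 ≤ 1 - ∑ c, x c i := fun i => by linarith [hxv i]
  -- the new load
  refine ⟨fun c i => x c i +
      (if c = c₀ then (if i ∈ N' then (1 - ∑ d, x d i) * (q / F) else 0) else 0),
    ?_, ?_, ?_, ?_, ?_⟩
  · intro c i
    have : (0:ℝ) ≤ (if c = c₀ then (if i ∈ N' then (1 - ∑ d, x d i) * (q / F) else 0) else 0) := by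
      split
      · split
        · exact mul_nonneg (hfree0 i) (div_nonneg hq.le hFpos.le)
        · exact le_refl 0
      · exact le_refl 0
    linarith [hx0 c i]
  · intro c i hne
    by_cases hxi : x c i ≠ 0
    · exact hxsupp c i hxi
    · push_neg at hxi
      simp only [hxi, zero_add] at hne
      have hcc : c = c₀ := by by_contra h; simp [h] at hne
      have hiN : i ∈ N' := by
        subst hcc; by_contra h; simp [h] at hne
      have hpref : c₀ ∈ prefixSet rank i j := by
        rw [mem_eqClass_iff.mp hiN]; exact hc₀C'
      subst hcc
      simpa [prefixSet] using hpref
  · intro i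
    rw [Finset.sum_add_distrib]
    have e2 : ∑ c, (if c = c₀ then (if i ∈ N' then (1 - ∑ d, x d i) * (q / F) else 0) else 0)
        = (if i ∈ N' then (1 - ∑ d, x d i) * (q / F) else 0) := by
      rw [Finset.sum_ite_eq' Finset.univ c₀
        (fun _ => if i ∈ N' then (1 - ∑ d, x d i) * (q / F) else 0)]
      simp
    rw [e2]
    split
    · have hqF : q / F ≤ 1 := (div_le_one hFpos).mpr hFq
      have := hfree0 i
      nlinarith [hxv i]
    · simpa using hxv i
  · intro c hc
    rw [Finset.sum_add_distrib]
    rcases Finset.mem_insert.mp hc with hcc | hcW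
    · subst hcc
      have ez : ∑ i, x c i = 0 := by
        apply Finset.sum_eq_zero; intro i _; exact hxnW c hc₀W i
      rw [ez, zero_add]
      simp only [eq_self_iff_true, if_true]
      have : ∑ i, (if i ∈ N' then (1 - ∑ d, x d i) * (q / F) else 0)
          = ∑ i ∈ N', (1 - ∑ d, x d i) * (q / F) := by
        rw [Finset.sum_ite_mem, Finset.univ_inter]
      rw [this, ← Finset.sum_mul, ← hF]
      field_simp
    · have hcc : c ≠ c₀ := by rintro rfl; exact hc₀W hcW
      simp only [if_neg hcc]
      simpa using hxW c hcW
  · intro c hc i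
    have hcW : c ∉ W := fun h => hc (Finset.mem_insert_of_mem h)
    have hcc : c ≠ c₀ := fun h => hc (h ▸ Finset.mem_insert_self c₀ W)
    simp [hxnW c hcW i, hcc]

lemma mdInv_rtg {rank : V → C ≃ Fin m} {q : ℝ} {j : ℕ} {W W' : Finset C}
    (hq : 0 < q) (h : MDInv rank q j W)
    (hs : Relation.ReflTransGen (mdStep rank q j) W W') : MDInv rank q j W' := by
  induction hs with
  | refl => exact h
  | tail _ hstep ih => exact mdInv_step hq ih hstep

lemma mdInv_card {rank : V → C ≃ Fin m} {q : ℝ} {j : ℕ} {W : Finset C}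
    (h : MDInv rank q j W) : q * (W.card : ℝ) ≤ (Fintype.card V : ℝ) := by
  obtain ⟨x, hx0, _, hxv, hxW, hxnW⟩ := h
  have e1 : q * (W.card : ℝ) = ∑ c ∈ W, ∑ i, x c i := by
    rw [Finset.sum_congr rfl (fun c hc => hxW c hc), Finset.sum_const, nsmul_eq_mul,
      mul_comm]
  have e2 : ∑ c ∈ W, ∑ i, x c i = ∑ c, ∑ i, x c i := by
    apply Finset.sum_subset (Finset.subset_univ _)
    intro c _ hc
    exact Finset.sum_eq_zero fun i _ => hxnW c hc i
  rw [e1, e2, Finset.sum_comm]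
  calc ∑ i, ∑ c, x c i ≤ ∑ (_ : V), (1:ℝ) := Finset.sum_le_sum (fun i _ => hxv i)
    _ = (Fintype.card V : ℝ) := by simp

lemma mdStep_card {rank : V → C ≃ Fin m} {q : ℝ} {j : ℕ} {W W' : Finset C}
    (hs : mdStep rank q j W W') : W'.card = W.card + 1 := by
  obtain ⟨C', _, c, _, hcW, rfl⟩ := hs
  exact Finset.card_insert_of_notMem hcW

lemma mdStage_exists (rank : V → C ≃ Fin m) (q : ℝ) (j : ℕ) :
    ∀ W : Finset C, ∃ W', mdStage rank q j W W' := by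
  suffices h : ∀ t : ℕ, ∀ W : Finset C, Fintype.card C - W.card ≤ t →
      ∃ W', mdStage rank q j W W' by
    intro W; exact h (Fintype.card C) W (Nat.sub_le _ _)
  intro t
  induction t with
  | zero =>
    intro W hW
    have hWu : W = Finset.univ := by
      apply Finset.eq_univ_of_card
      have := Finset.card_le_univ W
      omega
    refine ⟨W, Relation.ReflTransGen.refl, ?_⟩
    intro W'' hstep
    obtain ⟨C', _, c, _, hcW, _⟩ := hstep
    exact hcW (hWu ▸ Finset.mem_univ c)
  | succ t ih =>
    intro W hW
    by_cases hstep : ∃ W₁, mdStep rank q j W W₁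
    · obtain ⟨W₁, h1⟩ := hstep
      have hc1 : W₁.card = W.card + 1 := mdStep_card h1
      have hle : Fintype.card C - W₁.card ≤ t := by
        have := Finset.card_le_univ W₁
        omega
      obtain ⟨W', h2, h3⟩ := ih W₁ hle
      exact ⟨W', Relation.ReflTransGen.head h1 h2, h3⟩
    · push_neg at hstep
      exact ⟨W, Relation.ReflTransGen.refl, hstep⟩

/-- the Minimal Demand rule always terminates and outputs a
committee of size exactly `k`. -/
theorem md_terminates_card (rank : V → C ≃ Fin m) (q : ℝ) (k : ℕ)
    (hkm : k ≤ Fintype.card C)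
    (hql : (Fintype.card V : ℝ) / ((k : ℝ) + 1) < q)
    (hqu : q ≤ (Fintype.card V : ℝ) / (k : ℝ)) :
    (∃ W : Finset C, MDOutcome rank q W) ∧
    (∀ W : Finset C, MDOutcome rank q W → W.card = k) := by
  have hn0 : (0:ℝ) ≤ (Fintype.card V : ℝ) := Nat.cast_nonneg _
  have hk1 : (0:ℝ) < (k:ℝ) + 1 := by positivity
  have hq0 : 0 < q := lt_of_le_of_lt (div_nonneg hn0 hk1.le) hql
  have hkpos : 0 < k := by
    rcases Nat.eq_zero_or_pos k with hk | hk
    · subst hk; simp at hqu; linarith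
    · exact hk
  have hnpos : 0 < Fintype.card V := by
    rcases Nat.eq_zero_or_pos (Fintype.card V) with hn | hn
    · rw [hn] at hqu; simp at hqu; linarith
    · exact hn
  have hkR : (0:ℝ) < (k:ℝ) := by exact_mod_cast hkpos
  have hqk : q * k ≤ Fintype.card V := (le_div_iff₀ hkR).mp hqu
  have hqk1 : (Fintype.card V : ℝ) < q * ((k:ℝ)+1) := (div_lt_iff₀ hk1).mp hql
  have hfl : ⌊(Fintype.card V : ℝ) / q⌋ = (k : ℤ) := by
    rw [Int.floor_eq_iff]
    constructor
    · rw [le_div_iff₀ hq0]; push_cast; linarith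
    · rw [div_lt_iff₀ hq0]; push_cast; linarith
  constructor
  · -- existence
    let g : ℕ → Finset C := fun t => Nat.rec (∅ : Finset C)
      (fun j Wj => Classical.choose (mdStage_exists rank q (j+1) Wj)) t
    refine ⟨g m, g, rfl, ?_, rfl⟩
    intro j _
    exact Classical.choose_spec (mdStage_exists rank q (j+1) (g j))
  · intro W hW
    obtain ⟨f, hf0, hst, rfl⟩ := hW
    have hInv : ∀ j, j ≤ m → MDInv rank q j (f j) := by
      intro j
      induction j with
      | zero => intro _; rw [hf0]; exact mdInv_empty rank q 0
      | succ j ih =>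
        intro hjm
        have h1 : MDInv rank q (j+1) (f j) := mdInv_mono (Nat.le_succ j) (ih (by omega))
        exact mdInv_rtg hq0 h1 (hst j (by omega)).1
    have hub : (f m).card ≤ k := by
      have hcard := mdInv_card (hInv m le_rfl)
      by_contra hlt
      push_neg at hlt
      have hcr : (k:ℝ) + 1 ≤ ((f m).card : ℝ) := by exact_mod_cast hlt
      nlinarith
    obtain ⟨i0⟩ : Nonempty V := Fintype.card_pos_iff.mp hnpos
    have hmC : Fintype.card C = m := by
      rw [← Fintype.card_fin m]; exact Fintype.card_congr (rank i0)
    have hlb : k ≤ (f m).card := by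
      by_contra hlt
      push_neg at hlt
      obtain ⟨m', rfl⟩ : ∃ m', m = m' + 1 := ⟨m - 1, by omega⟩
      have hstage := hst m' (by omega)
      have hcC : (f (m'+1)).card < Fintype.card C := by omega
      have hne : ∃ c, c ∉ f (m'+1) := by
        by_contra hall
        push_neg at hall
        have : f (m'+1) = Finset.univ := Finset.eq_univ_iff_forall.mpr hall
        rw [this, Finset.card_univ] at hcC; omega
      obtain ⟨c, hc⟩ := hne
      apply hstage.2 (insert c (f (m'+1)))
      refine ⟨Finset.univ, ?_, c, Finset.mem_univ c, hc, rfl⟩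
      have hEQ : eqClass rank (m'+1) (Finset.univ : Finset C) = Finset.univ := by
        apply Finset.eq_univ_iff_forall.mpr
        intro i
        rw [mem_eqClass_iff]
        apply Finset.eq_univ_iff_forall.mpr
        intro c'
        simp only [prefixSet, Finset.mem_filter, Finset.mem_univ, true_and]
        exact (rank i c').isLt
      rw [hEQ, Finset.card_univ, hfl, Finset.inter_univ]
      have hmin : min (k:ℤ) ((Finset.univ : Finset C).card : ℤ) = (k:ℤ) := by
        rw [Finset.card_univ]
        apply min_eq_left
        exact_mod_cast hkm
      rw [hmin]
      exact_mod_cast hlt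
    omega
end

section
/- Every possible outcome of the Minimal Demand rule (for any choice of candidates added in Step 2) satisfies q-PSC. -/
open Finset

variable {V C : Type*} [Fintype V] [Fintype C] [DecidableEq V] [DecidableEq C] {m : ℕ}

/- ### Auxiliary lemmas -/

lemma card_filter_val_lt (m r : ℕ) (hr : r ≤ m) :
    (Finset.univ.filter fun v : Fin m => (v : ℕ) < r).card = r := by
  have h := Finset.filter_map (s := (Finset.univ : Finset (Fin m)))
      (f := Fin.valEmbedding) (p := fun x => x < r)
  rw [Fin.map_valEmbedding_univ] at h
  have h2 : (Iio m).filter (fun x => x < r) = Iio r := by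
    ext x; simp only [mem_filter, mem_Iio]; omega
  have := congrArg Finset.card h
  rw [h2, Finset.card_map] at this
  simpa [Nat.card_Iio] using this.symm

lemma card_rank_filter (e : C ≃ Fin m) (r : ℕ) (hr : r ≤ m) :
    (Finset.univ.filter fun c : C => (e c : ℕ) < r).card = r := by
  have hmap : (Finset.univ.filter fun c : C => (e c : ℕ) < r)
      = (Finset.univ.filter fun v : Fin m => (v : ℕ) < r).map e.symm.toEmbedding := by
    ext c
    simp only [mem_filter, mem_univ, true_and, Finset.mem_map_equiv, Equiv.symm_symm]
  rw [hmap, Finset.card_map, card_filter_val_lt m r hr]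

lemma prefix_eq_of_solid (rank : V → C ≃ Fin m) {N' : Finset V} {C' : Finset C}
    (hsolid : Solid rank N' C') (hjm : C'.card ≤ m) {i : V} (hi : i ∈ N') :
    prefixSet rank i C'.card = C' := by
  have hsub : C' ⊆ prefixSet rank i C'.card := by
    intro c' hc'
    simp only [prefixSet, mem_filter, mem_univ, true_and]
    by_contra hle
    push_neg at hle
    -- all candidates with rank below `rank i c'` are in `C'.erase c'`
    have hbelow : (Finset.univ.filter fun c => ((rank i) c : ℕ) < ((rank i) c' : ℕ))
        ⊆ C'.erase c' := by
      intro c hc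
      simp only [mem_filter, mem_univ, true_and] at hc
      have hcC' : c ∈ C' := by
        by_contra hnc
        exact absurd (hsolid i hi c' hc' c hnc) (by omega)
      exact Finset.mem_erase.2 ⟨by rintro rfl; omega, hcC'⟩
    have hcount : (Finset.univ.filter fun c => ((rank i) c : ℕ) < ((rank i) c' : ℕ)).card
        = ((rank i) c' : ℕ) := card_rank_filter (rank i) _ (le_of_lt ((rank i) c').2)
    have hle2 := Finset.card_le_card hbelow
    rw [hcount, Finset.card_erase_of_mem hc'] at hle2
    have hposC : 0 < C'.card := Finset.card_pos.mpr ⟨c', hc'⟩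
    omega
  have hcard : (prefixSet rank i C'.card).card ≤ C'.card := by
    rw [prefixSet, card_rank_filter (rank i) _ hjm]
  exact (Finset.eq_of_subset_of_card_le hsub hcard).symm

lemma mdStep_subset {rank : V → C ≃ Fin m} {q : ℝ} {j : ℕ} {W W' : Finset C}
    (h : mdStep rank q j W W') : W ⊆ W' := by
  obtain ⟨C', -, c, -, -, rfl⟩ := h
  exact Finset.subset_insert _ _

lemma mdRTG_subset {rank : V → C ≃ Fin m} {q : ℝ} {j : ℕ} {W W' : Finset C}
    (h : Relation.ReflTransGen (mdStep rank q j) W W') : W ⊆ W' := by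
  induction h with
  | refl => exact subset_rfl
  | tail _ hstep ih => exact ih.trans (mdStep_subset hstep)

/-- every possible outcome of the Minimal Demand rule satisfies
`q`-PSC. -/
theorem md_outcome_psc (rank : V → C ≃ Fin m) (q : ℝ) (k : ℕ)
    (hkm : k ≤ Fintype.card C)
    (hql : (Fintype.card V : ℝ) / ((k : ℝ) + 1) < q)
    (hqu : q ≤ (Fintype.card V : ℝ) / (k : ℝ)) :
    ∀ W : Finset C, MDOutcome rank q W → PSC rank q W := by
  have hq : 0 < q := lt_of_le_of_lt (by positivity) hql
  rintro W ⟨f, hf0, hstages, rfl⟩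
  intro ℓ hℓ N' C' hsolid hcard
  -- monotonicity of f
  have hmono : ∀ a b, a ≤ b → b ≤ m → f a ⊆ f b := by
    intro a b hab hbm
    induction b with
    | zero => simpa [Nat.le_zero.mp hab] using subset_rfl
    | succ n ih =>
      rcases Nat.lt_or_ge a (n+1) with h | h
      · exact (ih (Nat.lt_succ_iff.mp h) (by omega)).trans
          (mdRTG_subset (hstages n (by omega)).1)
      · have : a = n + 1 := le_antisymm hab h
        simp [this]
  rcases N'.eq_empty_or_nonempty with rfl | ⟨i₀, hi₀⟩
  · exfalso
    have : (0:ℝ) < (ℓ:ℝ) * q := by positivity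
    simp only [Finset.card_empty, Nat.cast_zero] at hcard
    linarith
  have hm : Fintype.card C = m := by
    simpa using Fintype.card_congr (rank i₀)
  have hjm : C'.card ≤ m := hm ▸ Finset.card_le_univ C'
  rcases Nat.eq_zero_or_pos C'.card with h0 | hpos
  · simp [h0]
  set j := C'.card with hj
  -- N' is inside the equivalence class at stage j
  have hNsub : N' ⊆ eqClass rank j C' := by
    intro i hi
    simp only [eqClass, mem_filter, mem_univ, true_and]
    exact prefix_eq_of_solid rank hsolid hjm hi
  obtain ⟨hrel, hstop⟩ := hstages (j - 1) (by omega)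
  have hj1 : j - 1 + 1 = j := by omega
  rw [hj1] at hrel hstop
  have hfsub : f j ⊆ f m := hmono j m hjm le_rfl
  by_cases hCW : C' ⊆ f j
  · have : C' ⊆ f m ∩ C' := Finset.subset_inter (hCW.trans hfsub) subset_rfl
    calc min ℓ C'.card ≤ C'.card := min_le_right _ _
      _ ≤ (f m ∩ C').card := Finset.card_le_card this
  · obtain ⟨c, hcC, hcW⟩ := Finset.not_subset.mp hCW
    have hnostep := hstop (insert c (f j))
    rw [mdStep] at hnostep
    push_neg at hnostep
    have hge : ¬ (((f j ∩ C').card : ℤ) <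
        min ⌊((eqClass rank j C').card : ℝ) / q⌋ (C'.card : ℤ)) := by
      intro hlt
      exact (hnostep C' hlt c hcC hcW) rfl
    push_neg at hge
    -- floor bound
    have hfloor : (ℓ : ℤ) ≤ ⌊((eqClass rank j C').card : ℝ) / q⌋ := by
      rw [Int.le_floor]
      rw [le_div_iff₀ hq]
      push_cast
      calc (ℓ : ℝ) * q ≤ (N'.card : ℝ) := hcard
        _ ≤ ((eqClass rank j C').card : ℝ) := by
            exact_mod_cast Nat.cast_le.mpr (Finset.card_le_card hNsub)
    have hmin : (min ℓ C'.card : ℤ) ≤ ((f j ∩ C').card : ℤ) := by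
      calc (min ℓ C'.card : ℤ) = min (ℓ : ℤ) (C'.card : ℤ) := by push_cast; rfl
        _ ≤ min ⌊((eqClass rank j C').card : ℝ) / q⌋ (C'.card : ℤ) :=
            min_le_min hfloor le_rfl
        _ ≤ ((f j ∩ C').card : ℤ) := hge
    have : min ℓ C'.card ≤ (f j ∩ C').card := by exact_mod_cast hmin
    calc min ℓ C'.card ≤ (f j ∩ C').card := this
      _ ≤ (f m ∩ C').card :=
          Finset.card_le_card (Finset.inter_subset_inter hfsub subset_rfl)
end

section
/- If a committee W of size k satisfies q-PSC, then there exists a sequence of choices in Step 2 of the Minimal Demand rule whose output is exactly W; i.e., W is a possible MD outcome (equivalently, W is reached along some path of the Dummett tree). -/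
open Finset

variable {V C : Type*} [Fintype V] [Fintype C] [DecidableEq V] [DecidableEq C] {m : ℕ}

/-- every committee of size `k` satisfying `q`-PSC is a possible
outcome of the Minimal Demand rule. -/
theorem psc_is_md_outcome (rank : V → C ≃ Fin m) (q : ℝ) (k : ℕ)
    (hkm : k ≤ Fintype.card C)
    (hql : (Fintype.card V : ℝ) / ((k : ℝ) + 1) < q)
    (hqu : q ≤ (Fintype.card V : ℝ) / (k : ℝ))
    (W : Finset C) (hWcard : W.card = k) (hPSC : PSC rank q W) :
    MDOutcome rank q W := by
  classical
  -- basic numeric facts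
  have hnn : (0:ℝ) ≤ (Fintype.card V : ℝ) := Nat.cast_nonneg _
  have hq : 0 < q := lt_of_le_of_lt (div_nonneg hnn (by positivity)) hql
  have hk : 0 < k := by
    rcases Nat.eq_zero_or_pos k with h | h
    · subst h
      simp only [Nat.cast_zero, div_zero] at hqu
      simp only [Nat.cast_zero, zero_add, div_one] at hql
      exact absurd (hq.trans_le hqu) (lt_irrefl 0)
    · exact h
  have hkR : (0:ℝ) < (k:ℝ) := by exact_mod_cast hk
  have hn : 0 < Fintype.card V := by
    rcases Nat.eq_zero_or_pos (Fintype.card V) with h | h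
    · rw [h] at hqu
      simp only [Nat.cast_zero, zero_div] at hqu
      exact absurd (hq.trans_le hqu) (lt_irrefl 0)
    · exact h
  obtain ⟨i0⟩ : Nonempty V := Fintype.card_pos_iff.mp hn
  have hm : Fintype.card C = m := by
    rw [Fintype.card_congr (rank i0), Fintype.card_fin]
  have hm1 : 1 ≤ m := hm ▸ le_trans hk hkm
  -- the floor of n/q is exactly k
  have hfloor : ⌊(Fintype.card V : ℝ) / q⌋ = (k : ℤ) := by
    rw [Int.floor_eq_iff]
    constructor
    · rw [Int.cast_natCast, le_div_iff₀ hq]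
      have h1 : q * (k:ℝ) ≤ (Fintype.card V : ℝ) := (le_div_iff₀ hkR).mp hqu
      linarith
    · rw [Int.cast_natCast, div_lt_iff₀ hq]
      have h2 : (Fintype.card V : ℝ) < q * ((k:ℝ) + 1) :=
        (div_lt_iff₀ (by positivity)).mp hql
      push_cast
      linarith
  -- the key step: if any md-step is possible from `W' ⊆ W`, then a step
  -- adding a candidate of `W` is possible
  have key : ∀ (j : ℕ) (W' : Finset C), W' ⊆ W →
      (∃ W'', mdStep rank q j W' W'') →
      ∃ c ∈ W, c ∉ W' ∧ mdStep rank q j W' (insert c W') := by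
    intro j W' hsub hstep
    obtain ⟨W'', C', hlt, _⟩ := hstep
    set N' : Finset V := eqClass rank j C' with hN'
    set L : ℤ := ⌊((N'.card : ℝ)) / q⌋ with hL
    have hL0 : 0 < L := by
      have h0 : (0:ℤ) ≤ ((W' ∩ C').card : ℤ) := Int.natCast_nonneg _
      have := h0.trans_lt hlt
      exact lt_of_lt_of_le this (min_le_left _ _)
    set ℓ : ℕ := L.toNat with hℓ
    have hℓ0 : 0 < ℓ := by omega
    have hℓL : (ℓ : ℤ) = L := Int.toNat_of_nonneg hL0.le
    have hsolid : Solid rank N' C' := by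
      intro i hi c' hc' c hc
      simp only [hN', eqClass, mem_filter, mem_univ, true_and] at hi
      have h1 : (rank i c' : ℕ) < j := by
        have := hc'
        rw [← hi] at this
        simpa [prefixSet] using this
      have h2 : ¬ ((rank i c : ℕ) < j) := by
        intro hlt'
        exact hc (by rw [← hi]; simpa [prefixSet] using hlt')
      omega
    have hℓq : (ℓ : ℝ) * q ≤ (N'.card : ℝ) := by
      have h1 : (L : ℝ) ≤ (N'.card : ℝ) / q := Int.floor_le _
      have h2 : (ℓ : ℝ) = (L : ℝ) := by exact_mod_cast hℓL
      rw [h2, ← le_div_iff₀ hq]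
      exact h1
    have hpsc := hPSC ℓ hℓ0 N' C' hsolid hℓq
    have hlt' : (W' ∩ C').card < min ℓ C'.card := by
      have : ((W' ∩ C').card : ℤ) < min (ℓ : ℤ) (C'.card : ℤ) := by
        rw [hℓL]; exact hlt
      rw [← Nat.cast_min] at this
      exact_mod_cast this
    have hcard : (W' ∩ C').card < (W ∩ C').card := lt_of_lt_of_le hlt' hpsc
    have hnsub : ¬ (W ∩ C') ⊆ (W' ∩ C') := fun h => absurd (card_le_card h) (by omega)
    obtain ⟨c, hc1, hc2⟩ := not_subset.mp hnsub
    have hcW : c ∈ W := (mem_inter.mp hc1).1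
    have hcC' : c ∈ C' := (mem_inter.mp hc1).2
    have hcW' : c ∉ W' := fun h => hc2 (mem_inter.mpr ⟨h, hcC'⟩)
    exact ⟨c, hcW, hcW', C', hlt, c, hcC', hcW', rfl⟩
  -- stage completion: from any `W' ⊆ W` we can finish the stage inside `W`
  have stage : ∀ (j n : ℕ) (W' : Finset C), W' ⊆ W → W.card - W'.card ≤ n →
      ∃ W'', W'' ⊆ W ∧ mdStage rank q j W' W'' := by
    intro j n
    induction n with
    | zero =>
      intro W' hsub hle
      have heq : W' = W := eq_of_subset_of_card_le hsub (by omega)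
      refine ⟨W', hsub, Relation.ReflTransGen.refl, ?_⟩
      intro W'' hstep
      obtain ⟨c, hcW, hcW', _⟩ := key j W' hsub ⟨W'', hstep⟩
      exact hcW' (heq ▸ hcW)
    | succ n ih =>
      intro W' hsub hle
      by_cases hstep : ∃ W'', mdStep rank q j W' W''
      · obtain ⟨c, hcW, hcW', hmd⟩ := key j W' hsub hstep
        have hsub' : insert c W' ⊆ W := insert_subset hcW hsub
        have hcard' : (insert c W').card = W'.card + 1 := card_insert_of_notMem hcW'
        have hle' : W.card - (insert c W').card ≤ n := by
          have := card_le_card hsub'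
          omega
        obtain ⟨W'', hW''sub, hrt, hno⟩ := ih (insert c W') hsub' hle'
        exact ⟨W'', hW''sub, Relation.ReflTransGen.head hmd hrt, hno⟩
      · push_neg at hstep
        exact ⟨W', hsub, Relation.ReflTransGen.refl, hstep⟩
  -- define the run by recursion with choice
  have hex : ∀ (p : {S : Finset C // S ⊆ W}) (j : ℕ),
      ∃ p' : {S : Finset C // S ⊆ W}, mdStage rank q j p.1 p'.1 := by
    intro p j
    obtain ⟨W'', h1, h2⟩ := stage j W.card p.1 p.2 (by omega)
    exact ⟨⟨W'', h1⟩, h2⟩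
  let g : ℕ → {S : Finset C // S ⊆ W} := fun n =>
    Nat.rec ⟨∅, empty_subset W⟩ (fun j p => Classical.choose (hex p (j + 1))) n
  have hg : ∀ j : ℕ, mdStage rank q (j + 1) (g j).1 (g (j + 1)).1 := by
    intro j
    exact Classical.choose_spec (hex (g j) (j + 1))
  refine ⟨fun n => (g n).1, rfl, fun j _ => hg j, ?_⟩
  -- it remains to show that the run ends exactly at `W`
  have hsubm : (g m).1 ⊆ W := (g m).2
  have hnostep : ∀ W'', ¬ mdStep rank q m ((g m).1) W'' := by
    have := (hg (m - 1)).2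
    rwa [Nat.sub_add_cancel hm1] at this
  by_contra hne
  have hlt : (g m).1.card < k := by
    have h1 : (g m).1.card ≤ k := hWcard ▸ card_le_card hsubm
    rcases lt_or_eq_of_le h1 with h | h
    · exact h
    · exact absurd (eq_of_subset_of_card_le hsubm (by omega)).symm hne
  -- build a step at stage m with `C' = univ`, contradiction
  have hprefix : ∀ i : V, prefixSet rank i m = univ := by
    intro i
    apply eq_univ_of_forall
    intro c
    simp [prefixSet, (rank i c).isLt]
  have heqc : eqClass rank m (univ : Finset C) = (univ : Finset V) := by
    apply eq_univ_of_forall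
    intro i
    simp [eqClass, hprefix i]
  obtain ⟨c, hcW, hcg⟩ := not_subset.mp
    (fun h : W ⊆ (g m).1 => absurd (card_le_card h) (by omega))
  apply hnostep (insert c (g m).1)
  refine ⟨univ, ?_, c, mem_univ c, hcg, rfl⟩
  rw [heqc, card_univ, hfloor, inter_univ, card_univ, hm]
  have : (k : ℤ) ≤ (m : ℤ) := by exact_mod_cast hm ▸ hkm
  rw [min_eq_left this]
  exact_mod_cast hlt
end

section
/- A committee W of size k satisfies q-PSC if and only if W is a possible outcome of the Minimal Demand rule. -/
/-!
Say that `W` meets the demands of stage `j` if every class of voters with common `j`-prefix `C'`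
gets `min (⌊|N'| / q⌋, |C'|)` candidates of `C'`. A solid coalition supporting `C'` lies in the
class whose `|C'|`-prefix is `C'`, and each class solidly supports its prefix, so `q`-PSC amounts
to meeting the demands of every stage. A stage of the rule ends exactly when its demands are met,
and later stages only add candidates, so every outcome satisfies PSC. Conversely, if `W` meets
all demands, an unmet demand of some `A ⊆ W` can always be served by a candidate of `W`, so the
rule can be run inside `W`; at stage `m` all `n` voters form one class demanding
`min (⌊n / q⌋, |C|) = k` candidates, which forces the outcome to be `W` itself.
-/

open Finset

variable {V C : Type*} [Fintype V] [Fintype C] [DecidableEq V] [DecidableEq C] {m : ℕ}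

section

variable {rank : V → C ≃ Fin m} {N' : Finset V} {C' : Finset C} {i : V}

omit [DecidableEq V]

omit [Fintype V] [Fintype C] [DecidableEq C] in
theorem Solid.card_le_rank (h : Solid rank N' C') (hi : i ∈ N') {c : C} (hc : c ∉ C') :
    C'.card ≤ rank i c := by
  have hsub : C'.map (rank i).toEmbedding ⊆ Iio (rank i c) := by
    intro x hx
    obtain ⟨c', hc', rfl⟩ := mem_map.1 hx
    exact mem_Iio.2 (h i hi c' hc' c hc)
  simpa using card_le_card hsub

omit [Fintype V] [Fintype C] in
theorem Solid.rank_lt_card (h : Solid rank N' C') (hi : i ∈ N') {c : C} (hc : c ∈ C') :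
    (rank i c : ℕ) < C'.card := by
  have hsub : Iic (rank i c) ⊆ C'.map (rank i).toEmbedding := by
    intro x hx
    rw [mem_map_equiv]
    by_contra hx'
    have := h i hi c hc _ hx'
    rw [Equiv.apply_symm_apply] at this
    exact (mem_Iic.1 hx).not_gt this
  have := card_le_card hsub
  rw [Fin.card_Iic, card_map] at this
  omega

omit [Fintype V] in
theorem Solid.prefixSet_card (h : Solid rank N' C') (hi : i ∈ N') :
    prefixSet rank i C'.card = C' := by
  ext c
  simp only [prefixSet, mem_filter, mem_univ, true_and]
  exact ⟨fun hc => not_not.1 fun hc' => (h.card_le_rank hi hc').not_gt hc, h.rank_lt_card hi⟩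

theorem Solid.subset_eqClass (h : Solid rank N' C') : N' ⊆ eqClass rank C'.card C' :=
  fun _ hi => mem_filter.2 ⟨mem_univ _, h.prefixSet_card hi⟩

theorem solid_eqClass (j : ℕ) (C' : Finset C) : Solid rank (eqClass rank j C') C' := by
  intro i hi c' hc' c hc
  simp only [eqClass, mem_filter, mem_univ, true_and] at hi
  simp only [← hi, prefixSet, mem_filter, mem_univ, true_and, not_lt] at hc' hc
  omega

theorem eqClass_univ : eqClass rank m univ = univ := by
  ext i
  simp [eqClass, prefixSet]

end

def DemandsMet (rank : V → C ≃ Fin m) (q : ℝ) (j : ℕ) (W : Finset C) : Prop :=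
  ∀ C' : Finset C,
    min ⌊((eqClass rank j C').card : ℝ) / q⌋ (C'.card : ℤ) ≤ ((W ∩ C').card : ℤ)

section

variable {rank : V → C ≃ Fin m} {q : ℝ} {j : ℕ} {W A B : Finset C}

omit [DecidableEq V]

theorem DemandsMet.mono (h : DemandsMet rank q j A) (hAB : A ⊆ B) : DemandsMet rank q j B :=
  fun C' => (h C').trans (by exact_mod_cast card_le_card (inter_subset_inter_right hAB))

theorem exists_mdStep_iff : (∃ B, mdStep rank q j A B) ↔ ¬ DemandsMet rank q j A := by
  simp only [DemandsMet, not_forall, not_le]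
  constructor
  · rintro ⟨B, C', hlt, -⟩
    exact ⟨C', hlt⟩
  · rintro ⟨C', hlt⟩
    have hcard : (A ∩ C').card < C'.card := by exact_mod_cast hlt.trans_le (min_le_right _ _)
    obtain ⟨c, hc, hcA⟩ := exists_mem_notMem_of_card_lt_card hcard
    exact ⟨_, C', hlt, c, hc, fun hcA' => hcA (mem_inter.2 ⟨hcA', hc⟩), rfl⟩

theorem mdStep.subset (h : mdStep rank q j A B) : A ⊆ B := by
  obtain ⟨-, -, c, -, -, rfl⟩ := h
  exact subset_insert c A

theorem mdStage.subset (h : mdStage rank q j A B) : A ⊆ B := by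
  obtain ⟨hAB, -⟩ := h
  induction hAB with
  | refl => exact Subset.rfl
  | tail _ hstep ih => exact ih.trans hstep.subset

theorem mdStage.demandsMet (h : mdStage rank q j A B) : DemandsMet rank q j B :=
  not_not.1 fun hB => (exists_mdStep_iff.2 hB).elim h.2

theorem exists_mdStep_insert (hW : DemandsMet rank q j W)
    (hA : ¬ DemandsMet rank q j A) : ∃ c ∈ W \ A, mdStep rank q j A (insert c A) := by
  simp only [DemandsMet, not_forall, not_le] at hA
  obtain ⟨C', hlt⟩ := hA
  have hcard : (A ∩ C').card < (W ∩ C').card := by exact_mod_cast hlt.trans_le (hW C')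
  obtain ⟨c, hc, hcA⟩ := exists_mem_notMem_of_card_lt_card hcard
  obtain ⟨hcW, hcC⟩ := mem_inter.1 hc
  have hcA : c ∉ A := fun hcA' => hcA (mem_inter.2 ⟨hcA', hcC⟩)
  exact ⟨c, mem_sdiff.2 ⟨hcW, hcA⟩, C', hlt, c, hcC, hcA, rfl⟩

theorem exists_mdStage_subset {A : Finset C} (hW : DemandsMet rank q j W) (hAW : A ⊆ W) :
    ∃ B ⊆ W, mdStage rank q j A B := by
  by_cases hA : DemandsMet rank q j A
  · exact ⟨A, hAW, .refl, fun B hB => exists_mdStep_iff.1 ⟨B, hB⟩ hA⟩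
  · obtain ⟨c, hc, hstep⟩ := exists_mdStep_insert hW hA
    obtain ⟨B, hBW, hAB, hB⟩ := exists_mdStage_subset hW (insert_subset (mem_sdiff.1 hc).1 hAW)
    exact ⟨B, hBW, .head hstep hAB, hB⟩
termination_by (W \ A).card
decreasing_by
  rw [sdiff_insert]
  exact card_erase_lt_of_mem hc

end

section

variable {rank : V → C ≃ Fin m} {q : ℝ} {W : Finset C}

omit [DecidableEq V]

theorem MDOutcome.demandsMet (h : MDOutcome rank q W) {j : ℕ} (hj : 0 < j) (hjm : j ≤ m) :
    DemandsMet rank q j W := by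
  obtain ⟨f, -, hstage, rfl⟩ := h
  have hf : ∀ n, j ≤ n → n ≤ m → f j ⊆ f n := by
    intro n hjn
    induction n, hjn using Nat.le_induction with
    | base => exact fun _ => Subset.rfl
    | succ n _ ih => exact fun hn => (ih (by omega)).trans (hstage n (by omega)).subset
  obtain ⟨j, rfl⟩ := Nat.exists_eq_add_one_of_ne_zero hj.ne'
  exact (hstage j (by omega)).demandsMet.mono (hf m hjm le_rfl)

theorem PSC.demandsMet (hq : 0 < q) (h : PSC rank q W) (j : ℕ) : DemandsMet rank q j W := by
  intro C'
  set E := (eqClass rank j C').card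
  rw [← Int.natCast_floor_eq_floor (by positivity)]
  rcases Nat.eq_zero_or_pos ⌊(E : ℝ) / q⌋₊ with hℓ | hℓ
  · simp [hℓ]
  · have hℓq : (⌊(E : ℝ) / q⌋₊ : ℝ) * q ≤ E := (le_div_iff₀ hq).1 (Nat.floor_le (by positivity))
    exact_mod_cast h _ hℓ _ C' (solid_eqClass j C') hℓq

theorem psc_of_demandsMet (hq : 0 < q) (h : ∀ j, 0 < j → j ≤ m → DemandsMet rank q j W) :
    PSC rank q W := by
  intro ℓ hℓ N' C' hsolid hN
  rcases Nat.eq_zero_or_pos C'.card with hC' | hC'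
  · simp [hC']
  obtain ⟨i, hi⟩ : N'.Nonempty := by
    rw [← card_pos, ← Nat.cast_pos (α := ℝ)]
    exact hN.trans_lt' (by positivity)
  have hCm : C'.card ≤ m := by
    simpa [Fintype.card_congr (rank i)] using card_le_univ C'
  have hℓE : (ℓ : ℤ) ≤ ⌊((eqClass rank C'.card C').card : ℝ) / q⌋ := by
    rw [Int.le_floor, le_div_iff₀ hq]
    exact_mod_cast hN.trans (by exact_mod_cast card_le_card hsolid.subset_eqClass)
  have := h _ hC' hCm C'
  omega

theorem exists_mdOutcome_subset (hW : ∀ j, DemandsMet rank q j W) :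
    ∃ W' ⊆ W, MDOutcome rank q W' := by
  choose! F hFW hF using fun j (A : Finset C) (hA : A ⊆ W) => exists_mdStage_subset (hW j) hA
  let f : ℕ → Finset C := fun n => Nat.rec ∅ (fun j A => F (j + 1) A) n
  have hfW : ∀ n, f n ⊆ W := by
    intro n
    induction n with
    | zero => exact empty_subset W
    | succ n ih => exact hFW _ _ ih
  exact ⟨f m, hfW m, f, rfl, fun j _ => hF _ _ (hfW j), rfl⟩

theorem min_le_card_of_demandsMet (h : DemandsMet rank q m W) :
    min ⌊(Fintype.card V : ℝ) / q⌋ (Fintype.card C : ℤ) ≤ W.card := by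
  simpa [eqClass_univ] using h univ

end

theorem floor_div_eq_of_div_add_one_lt_of_le_div {n k : ℕ} {q : ℝ} (hk : 0 < k)
    (hl : (n : ℝ) / (k + 1) < q) (hu : q ≤ n / k) : ⌊(n : ℝ) / q⌋ = k := by
  have hq : 0 < q := hl.trans_le' (by positivity)
  rw [Int.floor_eq_iff, le_div_iff₀ hq, div_lt_iff₀ hq]
  rw [div_lt_iff₀ (by positivity)] at hl
  rw [le_div_iff₀ (by positivity)] at hu
  push_cast
  constructor <;> linarith

/-- a committee `W` of size `k` satisfies `q`-PSC if and only if
`W` is a possible outcome of the Minimal Demand rule. -/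
theorem psc_iff_md_outcome (rank : V → C ≃ Fin m) (q : ℝ) (k : ℕ)
    (hkm : k ≤ Fintype.card C)
    (hql : (Fintype.card V : ℝ) / ((k : ℝ) + 1) < q)
    (hqu : q ≤ (Fintype.card V : ℝ) / (k : ℝ))
    (W : Finset C) (hWcard : W.card = k) :
    PSC rank q W ↔ MDOutcome rank q W := by
  have hq : 0 < q := hql.trans_le' (by positivity)
  have hk : 0 < k := Nat.pos_of_ne_zero fun hk => by
    simp only [hk, Nat.cast_zero, div_zero] at hqu
    linarith
  have hfloor := floor_div_eq_of_div_add_one_lt_of_le_div hk hql hqu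
  obtain ⟨i⟩ : Nonempty V := Fintype.card_pos_iff.1 <| Nat.pos_of_ne_zero fun hV => by
    simp only [hV, Nat.cast_zero, zero_div, Int.floor_zero] at hfloor
    omega
  have hm : 0 < m := by
    simpa [Fintype.card_congr (rank i)] using hk.trans_le hkm
  constructor
  · intro hpsc
    obtain ⟨W', hW'W, hW'⟩ := exists_mdOutcome_subset (hpsc.demandsMet hq)
    have hcard := min_le_card_of_demandsMet (hW'.demandsMet hm le_rfl)
    rw [hfloor, min_eq_left (by exact_mod_cast hkm)] at hcard
    rwa [← eq_of_subset_of_card_le hW'W (by omega)]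
  · exact fun hmd => psc_of_demandsMet hq fun _ => hmd.demandsMet
end

section
/- During an execution of the MD rule, once stage j of Step 2 terminates, the partial committee W_j satisfies: for every solid coalition N' supporting a set C' with |C'| ≤ j, |W_j ∩ C'| ≥ min(⌊|N'|/q⌋, |C'|). In particular, PSC demands pertaining to prefixes of size at most j are never violated at later stages. -/
set_option linter.unusedSectionVars false


open Finset

variable {V C : Type*} [Fintype V] [Fintype C] [DecidableEq V] [DecidableEq C] {m : ℕ}

lemma mdStage_subset {rank : V → C ≃ Fin m} {q : ℝ} {j : ℕ} {W W' : Finset C}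
    (h : mdStage rank q j W W') : W ⊆ W' := by
  obtain ⟨h1, -⟩ := h
  induction h1 with
  | refl => exact subset_rfl
  | tail _ h2 ih => exact ih.trans (mdStep_subset h2)

lemma prefixSet_card (rank : V → C ≃ Fin m) (i : V) {ℓ : ℕ} (h : ℓ ≤ m) :
    (prefixSet rank i ℓ).card = ℓ := by
  have himg : prefixSet rank i ℓ =
      (Finset.univ.filter fun x : Fin m => (x:ℕ) < ℓ).image (rank i).symm := by
    ext c
    simp only [prefixSet, Finset.mem_filter, Finset.mem_univ, true_and, Finset.mem_image]
    constructor
    · intro hc; exact ⟨rank i c, by simpa using hc, by simp⟩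
    · rintro ⟨x, hx, rfl⟩; simpa using hx
  have hfin : (Finset.univ.filter fun x : Fin m => (x:ℕ) < ℓ) =
      (Finset.range ℓ).attachFin (fun n hn => lt_of_lt_of_le (Finset.mem_range.mp hn) h) := by
    ext x; simp [Finset.mem_attachFin]
  rw [himg, Finset.card_image_of_injective _ (rank i).symm.injective, hfin,
    Finset.card_attachFin, Finset.card_range]

lemma solid_prefixSet_eq {rank : V → C ≃ Fin m} {N' : Finset V} {C' : Finset C}
    (hsolid : Solid rank N' C') {i : V} (hi : i ∈ N') (hm : C'.card ≤ m) :
    prefixSet rank i C'.card = C' := by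
  have hsub : prefixSet rank i C'.card ⊆ C' := by
    intro c hc
    simp only [prefixSet, Finset.mem_filter, Finset.mem_univ, true_and] at hc
    by_contra hcn
    -- every element of C' has rank below rank i c
    have hlt : ∀ c' ∈ C', (rank i c' : ℕ) < (rank i c : ℕ) := fun c' hc' =>
      hsolid i hi c' hc' c hcn
    have hinj : C'.card ≤ (rank i c : ℕ) := by
      calc C'.card = (C'.image fun c' => ((rank i c' : ℕ))).card := by
            rw [Finset.card_image_of_injective]
            intro a b hab
            exact (rank i).injective (Fin.val_injective hab)
        _ ≤ (Finset.range (rank i c : ℕ)).card := by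
            apply Finset.card_le_card
            intro x hx
            simp only [Finset.mem_image] at hx
            obtain ⟨c', hc', rfl⟩ := hx
            exact Finset.mem_range.mpr (hlt c' hc')
        _ = (rank i c : ℕ) := Finset.card_range _
    omega
  exact Finset.eq_of_subset_of_card_le hsub (by rw [prefixSet_card rank i hm])

/-- along any MD execution, after stage `j` terminates the partial
committee meets all PSC demands of solid coalitions supporting sets of size at
most `j`, and these demands remain met at all later stages. -/
theorem md_stage_invariant (rank : V → C ≃ Fin m) (q : ℝ) (k : ℕ)
    (hql : (Fintype.card V : ℝ) / ((k : ℝ) + 1) < q)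
    (hqu : q ≤ (Fintype.card V : ℝ) / (k : ℝ))
    (f : ℕ → Finset C) (hf0 : f 0 = ∅)
    (hstages : ∀ j < m, mdStage rank q (j + 1) (f j) (f (j + 1)))
    (j j' : ℕ) (hjj' : j ≤ j') (hj'm : j' ≤ m)
    (N' : Finset V) (C' : Finset C)
    (hsolid : Solid rank N' C') (hC' : C'.card ≤ j) :
    min ⌊(N'.card : ℝ) / q⌋ (C'.card : ℤ) ≤ ((f j' ∩ C').card : ℤ) := by
  have hq : 0 < q := lt_of_le_of_lt (by positivity) hql
  -- trivial cases
  rcases Nat.eq_zero_or_pos C'.card with h0 | hCpos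
  · calc min ⌊(N'.card : ℝ) / q⌋ (C'.card : ℤ) ≤ (C'.card : ℤ) := min_le_right _ _
      _ ≤ ((f j' ∩ C').card : ℤ) := by rw [h0]; positivity
  rcases Finset.eq_empty_or_nonempty N' with rfl | ⟨i₀, hi₀⟩
  · calc min ⌊(0:ℕ) / q⌋ ((C'.card : ℤ)) ≤ ⌊((0:ℕ):ℝ) / q⌋ := min_le_left _ _
      _ ≤ ((f j' ∩ C').card : ℤ) := by simp
  set ℓ := C'.card with hℓdef
  have hm : m = Fintype.card C := by
    rw [← Fintype.card_fin m]; exact (Fintype.card_congr (rank i₀)).symm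
  have hℓm : ℓ ≤ m := by
    rw [hm]; exact Finset.card_le_card (Finset.subset_univ C') |>.trans (by simp [Finset.card_univ])
  -- monotonicity of f
  have hmono : ∀ b ≤ m, ∀ a ≤ b, f a ⊆ f b := by
    intro b
    induction b with
    | zero => intro _ a ha; rw [Nat.le_zero.mp ha]
    | succ n ih =>
      intro hb a ha
      rcases Nat.lt_or_ge a (n+1) with h | h
      · exact (ih (by omega) a (by omega)).trans (mdStage_subset (hstages n (by omega)))
      · have : a = n + 1 := by omega
        rw [this]
  -- the stage ℓ terminates at f ℓ
  have hst := hstages (ℓ - 1) (by omega)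
  have hℓ1 : ℓ - 1 + 1 = ℓ := by omega
  rw [hℓ1] at hst
  have hterm := hst.2
  -- N' is contained in the eqClass at level ℓ
  have hNsub : N' ⊆ eqClass rank ℓ C' := by
    intro i hi
    simp only [eqClass, Finset.mem_filter, Finset.mem_univ, true_and]
    exact solid_prefixSet_eq hsolid hi hℓm
  have hgoal : min ⌊(N'.card : ℝ) / q⌋ (C'.card : ℤ) ≤ ((f ℓ ∩ C').card : ℤ) := by
    by_cases hCW : C' ⊆ f ℓ
    · have : f ℓ ∩ C' = C' := Finset.inter_eq_right.mpr hCW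
      rw [this]; exact min_le_right _ _
    · obtain ⟨c, hc, hcW⟩ := Finset.not_subset.mp hCW
      by_contra hcon
      push_neg at hcon
      apply hterm (insert c (f ℓ))
      refine ⟨C', ?_, c, hc, hcW, rfl⟩
      refine lt_of_lt_of_le hcon (min_le_min ?_ le_rfl)
      apply Int.floor_le_floor
      gcongr
  calc min ⌊(N'.card : ℝ) / q⌋ (C'.card : ℤ) ≤ ((f ℓ ∩ C').card : ℤ) := hgoal
    _ ≤ ((f j' ∩ C').card : ℤ) := by
        exact_mod_cast Finset.card_le_card
          (Finset.inter_subset_inter (hmono j' hj'm ℓ (by omega)) subset_rfl)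
end
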